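/- Let m ≥ 1 be an integer and δ₁ > 0. There exists C = C(δ₁, m) > 0 such that every locally absolutely continuous u : (0,∞) → ℝ with lim_{r→0+} u(r) = 0, lim_{r→∞} u(r) = 0 and E(u) ≤ 4m − δ₁ satisfies (1/C) ‖u‖²_{X²} ≤ E(u) ≤ C ‖u‖²_{X²}. -/

import Mathlib

/-!
Put `s = |sin u| |u'|`. By AM-GM, `2 m s` is bounded by the energy density, and since `cos ∘ u`
is absolutely continuous with derivative `-sin u · u'`, its variation over any interval is at most
the integral of `s`. As `u` vanishes at both ends of `(0, ∞)`, `cos ∘ u` has to go from `1` down to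
`cos (u r)` and back up, so `2 m (1 - cos (u r)) ≤ E(u) ≤ 4m - δ₁`. Thus `cos ∘ u` stays above
`δ₁ / 2m - 1 > -1`; by connectedness `u` never reaches `±π`, so `|u| ≤ M` for some `M < π`
depending only on `δ₁ / m`. Concavity of `sin` on `[0, π]` then gives `sin² u ≥ (sin M / M)² u²`,
which makes the two densities comparable.
-/

open MeasureTheory Filter Set

/-- Local absolute continuity on `(0,∞)`: the fundamental theorem of calculus holds
on every compact subinterval. -/
def LocAC (u : ℝ → ℝ) : Prop :=
  ∀ a b : ℝ, 0 < a → a ≤ b →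
    IntervalIntegrable (deriv u) volume a b ∧ u b - u a = ∫ r in a..b, deriv u r

/-- The `m`-corotational energy `E(u) = (1/2) ∫₀^∞ (u'² + m² sin²(u)/r²) r dr`. -/
noncomputable def corotE (m : ℕ) (u : ℝ → ℝ) : ℝ :=
  (1/2) * ∫ r in Set.Ioi (0:ℝ), (deriv u r ^ 2 + (m:ℝ)^2 * Real.sin (u r) ^ 2 / r ^ 2) * r

/-- The squared `X²` norm `‖u‖²_{X²} = ∫₀^∞ (u'² + m² u²/r²) r dr`. -/
noncomputable def X2sq (m : ℕ) (u : ℝ → ℝ) : ℝ :=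
  ∫ r in Set.Ioi (0:ℝ), (deriv u r ^ 2 + (m:ℝ)^2 * (u r) ^ 2 / r ^ 2) * r

open Real Topology
open scoped NNReal

theorem AbsolutelyContinuousOnInterval.congr {X : Type*} [PseudoMetricSpace X] {f g : ℝ → X}
    {a b : ℝ} (hf : AbsolutelyContinuousOnInterval f a b) (h : EqOn f g (uIcc a b)) :
    AbsolutelyContinuousOnInterval g a b := by
  refine Tendsto.congr' ?_ hf
  filter_upwards [mem_inf_of_right (mem_principal_self _)] with E hE
  exact Finset.sum_congr rfl fun i hi => by rw [h (hE.1 i hi).1, h (hE.1 i hi).2]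

theorem LipschitzWith.comp_absolutelyContinuousOnInterval {X Y : Type*} [PseudoMetricSpace X]
    [PseudoMetricSpace Y] {φ : X → Y} {K : ℝ≥0} {f : ℝ → X} {a b : ℝ} (hφ : LipschitzWith K φ)
    (hf : AbsolutelyContinuousOnInterval f a b) : AbsolutelyContinuousOnInterval (φ ∘ f) a b := by
  unfold AbsolutelyContinuousOnInterval at hf ⊢
  refine squeeze_zero (fun _ => Finset.sum_nonneg fun _ _ => dist_nonneg) (fun E => ?_)
    (by simpa using hf.const_mul (K : ℝ))
  rw [Finset.mul_sum]
  exact Finset.sum_le_sum fun i _ => hφ.dist_le_mul _ _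

theorem AbsolutelyContinuousOnInterval.integral_comp_mul_deriv {f φ φ' : ℝ → ℝ} {K : ℝ≥0}
    {a b : ℝ} (hf : AbsolutelyContinuousOnInterval f a b) (hφ : LipschitzWith K φ)
    (hφ' : ∀ x, HasDerivAt φ (φ' x) x) :
    ∫ x in a..b, φ' (f x) * deriv f x = φ (f b) - φ (f a) := by
  refine Eq.trans ?_ (hφ.comp_absolutelyContinuousOnInterval hf).integral_deriv_eq_sub
  apply intervalIntegral.integral_congr_ae
  filter_upwards [hf.ae_differentiableAt] with x hx hxab
  exact ((hφ' (f x)).comp x (hx (uIoc_subset_uIcc hxab)).hasDerivAt).deriv.symm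

namespace LocAC

variable {u : ℝ → ℝ}

theorem absolutelyContinuousOnInterval (hu : LocAC u) {a b : ℝ} (ha : 0 < a) (hab : a ≤ b) :
    AbsolutelyContinuousOnInterval u a b := by
  have hint := (hu a b ha hab).1.absolutelyContinuousOnInterval_intervalIntegral left_mem_uIcc
  refine ((LipschitzWith.const (u a)).lipschitzOnWith.absolutelyContinuousOnInterval.add
    hint).congr fun x hx => ?_
  rw [uIcc_of_le hab] at hx
  have := (hu a x ha hx.1).2
  simp only [Pi.add_apply]
  linarith

theorem continuousOn (hu : LocAC u) : ContinuousOn u (Ioi 0) := fun x (hx : 0 < x) =>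
  have hAC := hu.absolutelyContinuousOnInterval (b := 2 * x) (half_pos hx) (by linarith)
  (hAC.continuousOn.continuousAt <| by
    rw [uIcc_of_le (by linarith)]
    exact Icc_mem_nhds (by linarith) (by linarith)).continuousWithinAt

theorem abs_cos_sub_cos_le (hu : LocAC u) {a b : ℝ} (ha : 0 < a) (hab : a ≤ b) :
    |cos (u b) - cos (u a)| ≤ ∫ t in Ioc a b, |sin (u t)| * |deriv u t| := by
  rw [← (hu.absolutelyContinuousOnInterval ha hab).integral_comp_mul_deriv lipschitzWith_cos
    (φ' := fun x => -sin x) hasDerivAt_cos, intervalIntegral.integral_of_le hab]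
  refine abs_integral_le_integral_abs.trans_eq ?_
  simp [abs_mul]

end LocAC

theorem two_mul_abs_sub_le_integral_Ioi {F s : ℝ → ℝ} {L r : ℝ} (hs : IntegrableOn s (Ioi 0))
    (hs0 : ∀ t, 0 ≤ s t) (hF : ∀ a b, 0 < a → a ≤ b → |F b - F a| ≤ ∫ t in Ioc a b, s t)
    (h0 : Tendsto F (𝓝[>] 0) (𝓝 L)) (hinf : Tendsto F atTop (𝓝 L)) (hr : 0 < r) :
    2 * |F r - L| ≤ ∫ t in Ioi 0, s t := by
  have left : |F r - L| ≤ ∫ t in Ioc 0 r, s t := by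
    refine le_of_tendsto (tendsto_const_nhds.sub h0).abs ?_
    filter_upwards [Ioo_mem_nhdsGT hr] with a ha
    exact (hF a r ha.1 ha.2.le).trans (setIntegral_mono_set (hs.mono_set Ioc_subset_Ioi_self)
      (Eventually.of_forall hs0) (Ioc_subset_Ioc_left ha.1.le).eventuallyLE)
  have right : |L - F r| ≤ ∫ t in Ioi r, s t := by
    refine le_of_tendsto (hinf.sub tendsto_const_nhds).abs ?_
    filter_upwards [eventually_ge_atTop r] with b hb
    exact (hF r b hr hb).trans (setIntegral_mono_set (hs.mono_set (Ioi_subset_Ioi hr.le))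
      (Eventually.of_forall hs0) Ioc_subset_Ioi_self.eventuallyLE)
  rw [← Ioc_union_Ioi_eq_Ioi hr.le, setIntegral_union Ioc_disjoint_Ioi_same measurableSet_Ioi
    (hs.mono_set Ioc_subset_Ioi_self) (hs.mono_set (Ioi_subset_Ioi hr.le))]
  rw [abs_sub_comm] at right
  linarith

theorem two_mul_abs_mul_abs_le (x y : ℝ) {r : ℝ} (hr : 0 < r) :
    2 * (|x| * |y|) ≤ (y ^ 2 + x ^ 2 / r ^ 2) * r := by
  have key : (y ^ 2 + x ^ 2 / r ^ 2) * r - 2 * (|x| * |y|) = (|y| * r - |x|) ^ 2 / r := by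
    field_simp
    rw [← sq_abs x, ← sq_abs y]
    ring
  have : 0 ≤ (|y| * r - |x|) ^ 2 / r := by positivity
  linarith

theorem IsPreconnected.abs_lt {S : Set ℝ} (hS : IsPreconnected S) {c x₀ x : ℝ} (hx₀ : x₀ ∈ S)
    (h : |x₀| < c) (hc : c ∉ S) (hc' : -c ∉ S) (hx : x ∈ S) : |x| < c := by
  by_contra! hxc
  rcases le_abs'.1 hxc with hneg | hpos
  · exact hc' (hS.Icc_subset hx hx₀ ⟨hneg, by linarith [neg_abs_le x₀]⟩)
  · exact hc (hS.Icc_subset hx₀ hx ⟨by linarith [le_abs_self x₀], hpos⟩)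

theorem mul_le_sin_of_le {M x : ℝ} (hM0 : 0 < M) (hMπ : M ≤ π) (hx0 : 0 ≤ x) (hxM : x ≤ M) :
    sin M / M * x ≤ sin x := by
  have := strictConcaveOn_sin_Icc.concaveOn.2 (⟨le_rfl, pi_pos.le⟩ : (0 : ℝ) ∈ Icc 0 π)
    ⟨hM0.le, hMπ⟩ (sub_nonneg.2 ((div_le_one hM0).2 hxM)) (div_nonneg hx0 hM0.le)
    (sub_add_cancel 1 (x / M))
  simp only [smul_eq_mul, sin_zero, mul_zero, zero_add, div_mul_cancel₀ x hM0.ne'] at this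
  rwa [div_mul_comm]

theorem sq_sin_div_mul_sq_le_sin_sq {M x : ℝ} (hM0 : 0 < M) (hMπ : M ≤ π) (hx : |x| ≤ M) :
    (sin M / M) ^ 2 * x ^ 2 ≤ sin x ^ 2 := by
  have hsinM : 0 ≤ sin M / M := div_nonneg (sin_nonneg_of_nonneg_of_le_pi hM0.le hMπ) hM0.le
  calc (sin M / M) ^ 2 * x ^ 2 = (sin M / M * |x|) ^ 2 := by rw [mul_pow, sq_abs]
    _ ≤ sin |x| ^ 2 :=
      pow_le_pow_left₀ (by positivity) (mul_le_sin_of_le hM0 hMπ (abs_nonneg x) hx) 2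
    _ = sin x ^ 2 := by rcases abs_choice x with h | h <;> simp [h]

theorem exists_pos_lt_pi_cos_le {κ : ℝ} (hκ : -1 < κ) : ∃ M, 0 < M ∧ M < π ∧ cos M ≤ κ :=
  ⟨arccos (min κ 0), arccos_pos.2 (by linarith [min_le_right κ 0]),
    arccos_lt_pi.2 (lt_min hκ (by norm_num)),
    by rw [cos_arccos (le_min hκ.le (by norm_num)) (by linarith [min_le_right κ 0])];
       exact min_le_left κ 0⟩

theorem abs_le_of_forall_cos_le_cos {u : ℝ → ℝ} {M : ℝ} (hM0 : 0 ≤ M) (hMπ : M < π)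
    (hu : ContinuousOn u (Ioi 0)) (h0 : Tendsto u (𝓝[>] 0) (𝓝 0))
    (hcos : ∀ r > 0, cos M ≤ cos (u r)) {r : ℝ} (hr : 0 < r) : |u r| ≤ M := by
  have hneg : ∀ x ∈ u '' Ioi 0, cos π < cos x := by
    rintro _ ⟨t, ht, rfl⟩
    exact (strictAntiOn_cos ⟨hM0, hMπ.le⟩ ⟨pi_pos.le, le_rfl⟩ hMπ).trans_le (hcos t ht)
  obtain ⟨r₀, hr₀, hr₀pos⟩ :=
    ((h0.eventually (Ioo_mem_nhds (neg_lt_zero.2 pi_pos) pi_pos)).and self_mem_nhdsWithin).exists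
  have hlt : |u r| < π := (isPreconnected_Ioi.image u hu).abs_lt (mem_image_of_mem u hr₀pos)
    (abs_lt.2 hr₀) (fun h => (hneg π h).ne rfl) (fun h => (hneg _ h).ne (cos_neg π).symm)
    (mem_image_of_mem u hr)
  by_contra! hMr
  have := strictAntiOn_cos ⟨hM0, hMπ.le⟩ ⟨abs_nonneg _, hlt.le⟩ hMr
  rw [cos_abs] at this
  linarith [hcos r hr]

noncomputable def energyDensity (m : ℕ) (u : ℝ → ℝ) (r : ℝ) : ℝ :=
  (deriv u r ^ 2 + (m : ℝ) ^ 2 * sin (u r) ^ 2 / r ^ 2) * r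

noncomputable def X2Density (m : ℕ) (u : ℝ → ℝ) (r : ℝ) : ℝ :=
  (deriv u r ^ 2 + (m : ℝ) ^ 2 * u r ^ 2 / r ^ 2) * r

section Densities

variable (m : ℕ) (u : ℝ → ℝ) {r : ℝ}

theorem corotE_eq_integral_energyDensity :
    corotE m u = 1 / 2 * ∫ r in Ioi 0, energyDensity m u r := rfl

theorem X2sq_eq_integral_X2Density : X2sq m u = ∫ r in Ioi 0, X2Density m u r := rfl

theorem energyDensity_nonneg (hr : 0 ≤ r) : 0 ≤ energyDensity m u r := by
  unfold energyDensity; positivity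

theorem X2Density_nonneg (hr : 0 ≤ r) : 0 ≤ X2Density m u r := by
  unfold X2Density; positivity

theorem X2sq_nonneg : 0 ≤ X2sq m u :=
  setIntegral_nonneg measurableSet_Ioi fun _ hr => X2Density_nonneg m u (le_of_lt hr)

theorem energyDensity_le_X2Density (hr : 0 ≤ r) : energyDensity m u r ≤ X2Density m u r := by
  unfold energyDensity X2Density
  gcongr (_ + _ * ?_ / _) * _
  exact sin_sq_le_sq

theorem mul_X2Density_le_energyDensity {c : ℝ} (hc : c ≤ 1) (hsin : c * u r ^ 2 ≤ sin (u r) ^ 2)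
    (hr : 0 ≤ r) : c * X2Density m u r ≤ energyDensity m u r := by
  have hd : c * deriv u r ^ 2 ≤ deriv u r ^ 2 := mul_le_of_le_one_left (sq_nonneg _) hc
  calc c * X2Density m u r = (c * deriv u r ^ 2 + (m : ℝ) ^ 2 * (c * u r ^ 2) / r ^ 2) * r := by
        unfold X2Density; ring
    _ ≤ energyDensity m u r := by unfold energyDensity; gcongr

theorem two_mul_mul_abs_sin_mul_abs_deriv_le_energyDensity (hr : 0 < r) :
    2 * m * (|sin (u r)| * |deriv u r|) ≤ energyDensity m u r := by
  have := two_mul_abs_mul_abs_le (m * sin (u r)) (deriv u r) hr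
  rw [abs_mul, Nat.abs_cast, mul_pow] at this
  unfold energyDensity
  linarith

theorem aestronglyMeasurable_X2Density (hu : ContinuousOn u (Ioi 0)) :
    AEStronglyMeasurable (X2Density m u) (volume.restrict (Ioi 0)) := by
  have := hu.aemeasurable (μ := volume) measurableSet_Ioi
  have := (measurable_deriv u).aemeasurable (μ := volume.restrict (Ioi 0))
  unfold X2Density
  fun_prop

theorem integrableOn_X2Density {c : ℝ} (hc0 : 0 < c) (hc : c ≤ 1) (hu : ContinuousOn u (Ioi 0))
    (hsin : ∀ r > 0, c * u r ^ 2 ≤ sin (u r) ^ 2) (hE : IntegrableOn (energyDensity m u) (Ioi 0)) :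
    IntegrableOn (X2Density m u) (Ioi 0) := by
  refine Integrable.mono' (hE.const_mul c⁻¹) (aestronglyMeasurable_X2Density m u hu) ?_
  filter_upwards [ae_restrict_mem measurableSet_Ioi] with r (hr : 0 < r)
  rw [Real.norm_of_nonneg (X2Density_nonneg m u hr.le), le_inv_mul_iff₀ hc0]
  exact mul_X2Density_le_energyDensity m u hc (hsin r hr) hr.le

theorem mul_X2sq_le_two_mul_corotE {c : ℝ} (hc0 : 0 ≤ c) (hc : c ≤ 1)
    (hsin : ∀ r > 0, c * u r ^ 2 ≤ sin (u r) ^ 2) (hE : IntegrableOn (energyDensity m u) (Ioi 0)) :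
    c * X2sq m u ≤ 2 * corotE m u := by
  rw [corotE_eq_integral_energyDensity, X2sq_eq_integral_X2Density, ← integral_const_mul]
  have := setIntegral_mono_of_nonneg (s := Ioi 0)
    (fun r (hr : 0 < r) => mul_nonneg hc0 (X2Density_nonneg m u hr.le))
    (fun r (hr : 0 < r) => mul_X2Density_le_energyDensity m u hc (hsin r hr) hr.le) hE
  linarith

theorem two_mul_corotE_le_X2sq (hX : IntegrableOn (X2Density m u) (Ioi 0)) :
    2 * corotE m u ≤ X2sq m u := by
  rw [corotE_eq_integral_energyDensity, X2sq_eq_integral_X2Density]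
  have := setIntegral_mono_of_nonneg (s := Ioi 0)
    (fun r (hr : 0 < r) => energyDensity_nonneg m u hr.le)
    (fun r (hr : 0 < r) => energyDensity_le_X2Density m u hr.le) hX
  linarith

end Densities

theorem LocAC.two_mul_mul_one_sub_cos_le_corotE {m : ℕ} {u : ℝ → ℝ} (hu : LocAC u) (hm : 0 < m)
    (h0 : Tendsto u (𝓝[>] 0) (𝓝 0)) (hinf : Tendsto u atTop (𝓝 0))
    (hE : IntegrableOn (energyDensity m u) (Ioi 0)) {r : ℝ} (hr : 0 < r) :
    2 * m * (1 - cos (u r)) ≤ corotE m u := by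
  set s := fun t => |sin (u t)| * |deriv u t|
  have hm' : (0 : ℝ) < 2 * m := by positivity
  have hs_le : ∀ t ∈ Ioi (0 : ℝ), 2 * m * s t ≤ energyDensity m u t := fun t ht =>
    two_mul_mul_abs_sin_mul_abs_deriv_le_energyDensity m u ht
  have hs_meas : AEStronglyMeasurable s (volume.restrict (Ioi 0)) := by
    have := hu.continuousOn.aemeasurable (μ := volume) measurableSet_Ioi
    have := (measurable_deriv u).aemeasurable (μ := volume.restrict (Ioi 0))
    fun_prop
  have hs_int : IntegrableOn s (Ioi 0) := by
    refine Integrable.mono' (hE.const_mul (2 * m : ℝ)⁻¹) hs_meas ?_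
    filter_upwards [ae_restrict_mem measurableSet_Ioi] with t ht
    rw [Real.norm_of_nonneg (by positivity), le_inv_mul_iff₀ hm']
    exact hs_le t ht
  have hcos := two_mul_abs_sub_le_integral_Ioi hs_int (fun t => by positivity)
    (fun a b ha hab => hu.abs_cos_sub_cos_le ha hab)
    (by simpa [Function.comp_def] using (continuous_cos.tendsto 0).comp h0)
    (by simpa [Function.comp_def] using (continuous_cos.tendsto 0).comp hinf) hr
  rw [abs_sub_comm, abs_of_nonneg (sub_nonneg.2 (cos_le_one _))] at hcos
  have hsE : 2 * m * ∫ t in Ioi 0, s t ≤ ∫ t in Ioi 0, energyDensity m u t := by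
    rw [← integral_const_mul]
    exact setIntegral_mono_of_nonneg (fun t _ => by positivity) hs_le hE
  rw [corotE_eq_integral_energyDensity]
  nlinarith

/-- Below the threshold `2E(Q) = 4m`, the energy is comparable to the squared `X²` norm. -/
theorem energy_X2_comparable_below_threshold
    (m : ℕ) (hm : 1 ≤ m) (δ₁ : ℝ) (hδ₁ : 0 < δ₁) :
    ∃ C : ℝ, 0 < C ∧
      ∀ u : ℝ → ℝ, LocAC u →
        Tendsto u (nhdsWithin 0 (Set.Ioi 0)) (nhds 0) →
        Tendsto u atTop (nhds 0) →
        IntegrableOn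
          (fun r => (deriv u r ^ 2 + (m:ℝ)^2 * Real.sin (u r) ^ 2 / r ^ 2) * r)
          (Set.Ioi (0:ℝ)) →
        corotE m u ≤ 4 * m - δ₁ →
        (1/C) * X2sq m u ≤ corotE m u ∧ corotE m u ≤ C * X2sq m u := by
  obtain ⟨M, hM0, hMπ, hcosM⟩ := exists_pos_lt_pi_cos_le (κ := δ₁ / (2 * m) - 1)
    (by linarith [show 0 < δ₁ / (2 * m) by positivity])
  have hsinM : 0 < sin M := sin_pos_of_pos_of_lt_pi hM0 hMπ
  set c := (sin M / M) ^ 2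
  have hc0 : 0 < c := by positivity
  have hc1 : c ≤ 1 := pow_le_one₀ (by positivity) ((div_le_one hM0).2 (sin_le hM0.le))
  refine ⟨2 / c, by positivity, fun u hu h0 hinf hE hEδ => ?_⟩
  have hcos : ∀ r > 0, cos M ≤ cos (u r) := fun r hr => by
    have := hu.two_mul_mul_one_sub_cos_le_corotE hm h0 hinf hE hr
    have : δ₁ / (2 * m) - 1 ≤ cos (u r) := by
      rw [div_sub_one (by positivity), div_le_iff₀ (by positivity)]
      linarith
    linarith
  have hsin : ∀ r > 0, c * u r ^ 2 ≤ sin (u r) ^ 2 := fun r hr =>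
    sq_sin_div_mul_sq_le_sin_sq hM0 hMπ.le
      (abs_le_of_forall_cos_le_cos hM0.le hMπ hu.continuousOn h0 hcos hr)
  have hlow := mul_X2sq_le_two_mul_corotE m u hc0.le hc1 hsin hE
  have hup := two_mul_corotE_le_X2sq m u
    (integrableOn_X2Density m u hc0 hc1 hu.continuousOn hsin hE)
  have hc2 : 2 ≤ 2 / c := by rw [le_div_iff₀ hc0]; linarith
  refine ⟨by rw [one_div_div]; linarith, ?_⟩
  nlinarith [X2sq_nonneg m u]
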